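/- Let G = (V,E) be a finite simple undirected graph and let G' be the graph on vertex set V ⊎ V (with copies written inl v and inr v) whose edges are: inl u – inl v for every edge uv ∈ E, and inl v – inr v for every v ∈ V. Let T = { inr v : v ∈ V } be the set of terminals of G'. Then every LP-feasible assignment d for (G',T) has cost at least μ(G), the maximum size of a matching in G. -/

import Mathlib

/-!
An LP-feasible `d` yields a fractional vertex cover `v ↦ d (inl v)` of `G`: for every edge `uv`,
the path `inr u — inl u — inl v — inr v` joins two terminals through exactly the non-terminals
`inl u` and `inl v`, so `d (inl u) + d (inl v) ≥ 1`. Weak LP duality then bounds every matching: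
its edges are vertex-disjoint and each carries weight at least `1`.
-/

open Finset

/-- The graph `G'` on `V ⊕ V`: `inl u — inl v` for every edge `uv` of `G`, together with
the pendant edges `inl v — inr v` for every `v ∈ V`. -/
def terminalGadget {V : Type*} (G : SimpleGraph V) : SimpleGraph (V ⊕ V) where
  Adj a b :=
    match a, b with
    | .inl u, .inl v => G.Adj u v
    | .inl u, .inr v => u = v
    | .inr u, .inl v => u = v
    | .inr _, .inr _ => False
  symm := by
    constructor
    rintro (u | u) (v | v) h
    · exact G.adj_symm h
    · exact h.symm
    · exact h.symm
    · exact h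
  loopless := by
    constructor
    rintro (u | u) h
    · exact G.irrefl h
    · exact h

/-- `M` is a matching of `G`: a set of edges of `G` that are pairwise vertex-disjoint. -/
def IsMatching {V : Type*} (G : SimpleGraph V) (M : Finset (Sym2 V)) : Prop :=
  (∀ e ∈ M, e ∈ G.edgeSet) ∧
  ∀ e ∈ M, ∀ f ∈ M, e ≠ f → ∀ v : V, v ∈ e → v ∉ f

/-- `μ(G)`: the maximum cardinality of a matching of `G`. -/
noncomputable def matchingNumber {V : Type*} (G : SimpleGraph V) : ℕ :=
  sSup {n : ℕ | ∃ M : Finset (Sym2 V), IsMatching G M ∧ M.card = n}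

section

variable {V : Type*}

/-- The terminals are the `inr` vertices; `a.isLeft` selects the non-terminals. -/
def IsLPFeasible [DecidableEq V] (G : SimpleGraph V) (d : V ⊕ V → ℝ) : Prop :=
  ∀ ⦃t₁ t₂ : V ⊕ V⦄, t₁ ∈ Set.range Sum.inr → t₂ ∈ Set.range Sum.inr →
    t₁ ≠ t₂ → ∀ p : (terminalGadget G).Walk t₁ t₂, p.IsPath →
      1 ≤ ∑ v ∈ p.support.toFinset.filter (fun a => a.isLeft = true), d v

def IsFractionalVertexCover (G : SimpleGraph V) (w : V → ℝ) : Prop :=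
  (∀ v, 0 ≤ w v) ∧ ∀ ⦃u v⦄, G.Adj u v → 1 ≤ w u + w v

theorem exists_isMatching_card_eq_matchingNumber [Fintype V] [DecidableEq V]
    (G : SimpleGraph V) : ∃ M, IsMatching G M ∧ M.card = matchingNumber G := by
  let sizes := {n | ∃ M : Finset (Sym2 V), IsMatching G M ∧ M.card = n}
  have hne : sizes.Nonempty := ⟨0, ∅, ⟨by simp, by simp⟩, rfl⟩
  have hbdd : BddAbove sizes := by
    refine ⟨Fintype.card (Sym2 V), ?_⟩
    rintro n ⟨M, -, rfl⟩
    exact M.card_le_univ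
  exact Nat.sSup_mem hne hbdd

theorem IsMatching.card_le_sum [Fintype V] [DecidableEq V] {G : SimpleGraph V}
    {M : Finset (Sym2 V)} (hM : IsMatching G M) {w : V → ℝ}
    (hw : IsFractionalVertexCover G w) : (M.card : ℝ) ≤ ∑ v, w v := by
  have hedge : ∀ e ∈ M, 1 ≤ ∑ v ∈ e.toFinset, w v := by
    intro e he
    induction e using Sym2.ind with
    | _ u v =>
      have hadj : G.Adj u v := hM.1 _ he
      have htoFinset : s(u, v).toFinset = {u, v} := by ext; simp [Sym2.mem_toFinset]
      rw [htoFinset, sum_pair hadj.ne]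
      exact hw.2 hadj
  have hdisj : (M : Set (Sym2 V)).PairwiseDisjoint Sym2.toFinset := by
    intro e he f hf hef
    rw [Function.onFun, disjoint_left]
    intro v hve hvf
    exact hM.2 e he f hf hef v (Sym2.mem_toFinset.1 hve) (Sym2.mem_toFinset.1 hvf)
  calc (M.card : ℝ) = ∑ _e ∈ M, (1 : ℝ) := by simp
    _ ≤ ∑ e ∈ M, ∑ v ∈ e.toFinset, w v := sum_le_sum hedge
    _ = ∑ v ∈ M.biUnion Sym2.toFinset, w v := (sum_biUnion hdisj).symm
    _ ≤ ∑ v, w v := sum_le_sum_of_subset_of_nonneg (subset_univ _) fun v _ _ => hw.1 v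

theorem IsLPFeasible.one_le_add [DecidableEq V] {G : SimpleGraph V} {d : V ⊕ V → ℝ}
    (hd : IsLPFeasible G d) {u v : V} (hadj : G.Adj u v) :
    1 ≤ d (Sum.inl u) + d (Sum.inl v) := by
  let p : (terminalGadget G).Walk (Sum.inr u) (Sum.inr v) :=
    .cons (show (terminalGadget G).Adj (Sum.inr u) (Sum.inl u) from rfl) <|
      .cons (show (terminalGadget G).Adj (Sum.inl u) (Sum.inl v) from hadj) <|
        .cons (show (terminalGadget G).Adj (Sum.inl v) (Sum.inr v) from rfl) .nil
  have hpath : p.IsPath := by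
    simp [p, SimpleGraph.Walk.isPath_def, hadj.ne]
  have hnonterminals : p.support.toFinset.filter (fun a => a.isLeft = true) =
      {Sum.inl u, Sum.inl v} := by
    ext (x | x) <;> simp [p]
  have := hd ⟨u, rfl⟩ ⟨v, rfl⟩ (by simp [hadj.ne]) p hpath
  rwa [hnonterminals, sum_pair (by simpa using hadj.ne)] at this

theorem IsLPFeasible.isFractionalVertexCover [DecidableEq V] {G : SimpleGraph V}
    {d : V ⊕ V → ℝ} (hd : IsLPFeasible G d) (hnn : ∀ v : V, 0 ≤ d (Sum.inl v)) :
    IsFractionalVertexCover G (fun v => d (Sum.inl v)) :=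
  ⟨hnn, fun _ _ hadj => hd.one_le_add hadj⟩

end

/-- Every LP-feasible assignment `d` for `(G', T)`, where `T = {inr v : v ∈ V}` is the
set of terminals of the gadget graph `G'`, has cost at least `μ(G)`. Non-terminal
vertices are exactly the `inl` vertices. -/
theorem lp_cost_ge_matchingNumber {V : Type*} [Fintype V] [DecidableEq V]
    (G : SimpleGraph V) (d : V ⊕ V → ℝ)
    (hnn : ∀ v : V, 0 ≤ d (Sum.inl v))
    (hfeas : ∀ ⦃t₁ t₂ : V ⊕ V⦄, t₁ ∈ Set.range Sum.inr → t₂ ∈ Set.range Sum.inr →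
      t₁ ≠ t₂ → ∀ p : (terminalGadget G).Walk t₁ t₂, p.IsPath →
        1 ≤ ∑ v ∈ p.support.toFinset.filter (fun a => a.isLeft = true), d v) :
    (matchingNumber G : ℝ) ≤ ∑ v : V, d (Sum.inl v) := by
  obtain ⟨M, hM, hcard⟩ := exists_isMatching_card_eq_matchingNumber G
  have hcover : IsFractionalVertexCover G (fun v => d (Sum.inl v)) :=
    IsLPFeasible.isFractionalVertexCover hfeas hnn
  rw [← hcard]
  exact hM.card_le_sum hcover
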